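/- (Hölder's formula) For every positive integer m and every positive integer n, the Ramanujan sum satisfies c_m(n) = μ(m / gcd(m,n)) · φ(m) / φ(m / gcd(m,n)), where μ is the Möbius function and φ is Euler's totient function. -/

import Mathlib

open Finset Real Complex ArithmeticFunction
open scoped ArithmeticFunction.Moebius

/-- The Ramanujan sum `c_m(n) = ∑_{1 ≤ k ≤ m, gcd(k,m)=1} exp(2πikn/m)`. -/
noncomputable def ramanujanSum (m n : ℕ) : ℂ :=
  ∑ k ∈ (Icc 1 m).filter (fun k => Nat.gcd k m = 1),
    Complex.exp (2 * Real.pi * Complex.I * k * n / m)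

/-!
Write `m = d r` and `n = d n'` with `d = gcd(m, n)`, so that `c_m(n) = ∑_{u ∈ (ℤ/m)ˣ} ψ_r(u n')`
for the standard additive character `ψ_r` of `ℤ/r`. The reduction `(ℤ/m)ˣ → (ℤ/r)ˣ` is a
surjective group homomorphism, so each of its fibres has `φ(m)/φ(r)` elements; and since `n'` is
a unit mod `r`, the sum over `(ℤ/r)ˣ` is the sum of the primitive `r`-th roots of unity, which is
`μ(r)` by Möbius inversion of `∑_{ζ^r = 1} ζ = [r = 1]`.
-/

open ZMod (stdAddChar unitsMap)
open scoped Nat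

theorem Function.Periodic.sum_Icc_one_eq_sum_range {M : Type*} [AddCommMonoid M] {f : ℕ → M}
    {m : ℕ} (hf : Function.Periodic f m) : ∑ k ∈ Icc 1 m, f k = ∑ k ∈ range m, f k := by
  rcases m with _ | m
  · simp
  rw [← Ico_add_one_right_eq_Icc, sum_Ico_eq_sum_range, Nat.add_sub_cancel,
    sum_range_succ (fun k => f (1 + k)), sum_range_succ' f, add_comm 1 m, hf.eq]
  simp only [add_comm 1]

theorem Finset.sum_range_mul_filter_dvd {M : Type*} [AddCommMonoid M] {d : ℕ} (hd : d ≠ 0)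
    (r : ℕ) (f : ℕ → M) : ∑ k ∈ range (d * r) with d ∣ k, f k = ∑ j ∈ range r, f (d * j) := by
  symm
  refine sum_nbij' (d * ·) (· / d) (fun j hj => ?_) (fun k hk => ?_) (fun j _ => ?_)
    (fun k hk => ?_) (fun _ _ => rfl)
  · simp only [mem_filter, mem_range] at hj ⊢
    exact ⟨(Nat.mul_lt_mul_left (Nat.pos_of_ne_zero hd)).2 hj, dvd_mul_right d j⟩
  · simp only [mem_filter, mem_range] at hk ⊢
    exact Nat.div_lt_of_lt_mul hk.1
  · simp [hd]
  · exact Nat.mul_div_cancel' (mem_filter.1 hk).2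

theorem MonoidHom.card_nsmul_sum_comp_of_surjective {G H M : Type*} [Group G] [Group H]
    [Fintype G] [Fintype H] [AddCommMonoid M] (f : G →* H) (hf : Function.Surjective f)
    (g : H → M) : Fintype.card H • ∑ x, g (f x) = Fintype.card G • ∑ y, g y := by
  classical
  have hfiber (y : H) : #{x | f x = y} = #{x | f x = 1} :=
    card_fiber_eq_of_mem_range f (hf y) (hf 1)
  have hcard : Fintype.card G = Fintype.card H * #{x | f x = 1} := by
    rw [← card_univ, card_eq_sum_card_fiberwise (f := f) (t := univ) (by simp)]
    simp [hfiber]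
  rw [sum_comp, image_univ_of_surjective hf, hcard, mul_comm, mul_smul]
  simp only [hfiber, smul_sum]
  exact sum_congr rfl fun y _ => smul_comm _ _ _

theorem ArithmeticFunction.sum_divisors_moebius {R : Type*} [Ring R] (n : ℕ) :
    ∑ d ∈ n.divisors, (μ d : R) = if n = 1 then 1 else 0 := by
  have := coe_mul_zeta_apply (f := (μ : ArithmeticFunction R)) (x := n)
  simp only [intCoe_apply] at this
  rw [← this, coe_moebius_mul_coe_zeta, one_apply]

namespace ZMod

variable {m : ℕ} [NeZero m]

theorem sum_units_eq_sum_range_filter_coprime {M : Type*} [AddCommMonoid M] (g : ZMod m → M) :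
    ∑ u : (ZMod m)ˣ, g u = ∑ k ∈ range m with k.Coprime m, g k := by
  refine sum_bij' (fun u _ => (u : ZMod m).val) (fun k hk => unitOfCoprime k (mem_filter.1 hk).2)
    (fun u _ => ?_) (fun _ _ => mem_univ _) (fun u _ => ?_) (fun k hk => ?_) (fun u _ => ?_)
  · exact mem_filter.2 ⟨mem_range.2 (val_lt _), val_coe_unit_coprime u⟩
  · exact Units.ext (natCast_zmod_val _)
  · rw [coe_unitOfCoprime, val_cast_of_lt (mem_range.1 (mem_filter.1 hk).1)]
  · rw [natCast_zmod_val]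

theorem stdAddChar_natCast (k : ℕ) : stdAddChar (k : ZMod m) = exp (2 * π * I * k / m) := by
  simpa using stdAddChar_coe (N := m) k

theorem stdAddChar_natCast_mul_left (d : ℕ) [NeZero d] (k : ℕ) :
    stdAddChar ((d * k : ℕ) : ZMod (d * m)) = stdAddChar (k : ZMod m) := by
  have : (d : ℂ) ≠ 0 := NeZero.ne _
  rw [stdAddChar_natCast, stdAddChar_natCast]
  push_cast
  field_simp

theorem stdAddChar_mul_natCast_mul_left (d : ℕ) [NeZero d] (x : ZMod (d * m)) (n : ℕ) :
    stdAddChar (x * ((d * n : ℕ) : ZMod (d * m))) = stdAddChar (cast x * (n : ZMod m)) := by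
  conv_lhs => rw [← natCast_zmod_val x]
  rw [cast_eq_val, ← Nat.cast_mul, ← Nat.cast_mul, mul_left_comm, stdAddChar_natCast_mul_left]

theorem sum_range_stdAddChar :
    ∑ j ∈ range m, stdAddChar (j : ZMod m) = if m = 1 then 1 else 0 := by
  split_ifs with hm
  · subst hm
    simp
  have hζ : IsPrimitiveRoot (stdAddChar (1 : ZMod m)) m := by
    rw [← Nat.cast_one, stdAddChar_natCast, Nat.cast_one, mul_one]
    exact Complex.isPrimitiveRoot_exp m (NeZero.ne m)
  rw [← hζ.geom_sum_eq_zero (by have := NeZero.ne m; omega)]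
  refine sum_congr rfl fun j _ => ?_
  rw [← AddChar.map_nsmul_eq_pow, nsmul_one]

theorem sum_units_stdAddChar :
    ∑ u : (ZMod m)ˣ, stdAddChar (u : ZMod m) = μ m := by
  have hm := NeZero.ne m
  rw [sum_units_eq_sum_range_filter_coprime]
  calc ∑ k ∈ range m with k.Coprime m, stdAddChar (k : ZMod m)
      = ∑ k ∈ range m, ∑ d ∈ (k.gcd m).divisors, (μ d : ℂ) * stdAddChar (k : ZMod m) := by
        rw [sum_filter]
        refine sum_congr rfl fun k _ => ?_
        rw [← sum_mul, sum_divisors_moebius]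
        split_ifs <;> simp_all [Nat.Coprime]
    _ = ∑ d ∈ m.divisors, ∑ k ∈ range m with d ∣ k, (μ d : ℂ) * stdAddChar (k : ZMod m) :=
        sum_comm' fun k d => by simp [Nat.dvd_gcd_iff, hm]; tauto
    _ = ∑ d ∈ m.divisors, (μ d : ℂ) * if d = m then 1 else 0 := by
        refine sum_congr rfl fun d hd => ?_
        obtain ⟨r, rfl⟩ := (Nat.mem_divisors.1 hd).1
        have : NeZero d := ⟨left_ne_zero_of_mul hm⟩
        have : NeZero r := ⟨right_ne_zero_of_mul hm⟩
        simp only [← mul_sum, sum_range_mul_filter_dvd (NeZero.ne d), stdAddChar_natCast_mul_left,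
          sum_range_stdAddChar, left_eq_mul₀ (NeZero.ne d)]
    _ = μ m := by simp [hm]

theorem sum_units_stdAddChar_mul_natCast_of_coprime {n : ℕ} (h : n.Coprime m) :
    ∑ u : (ZMod m)ˣ, stdAddChar (u * n : ZMod m) = ∑ u : (ZMod m)ˣ, stdAddChar (u : ZMod m) :=
  Fintype.sum_equiv (Equiv.mulRight (unitOfCoprime n h)) _ _ fun u => by simp

end ZMod

theorem ramanujanSum_eq_sum_units (m n : ℕ) [NeZero m] :
    ramanujanSum m n = ∑ u : (ZMod m)ˣ, stdAddChar (u * n : ZMod m) := by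
  have hperiodic : Function.Periodic
      (fun k : ℕ => if k.Coprime m then stdAddChar (k * n : ZMod m) else 0) m :=
    fun k => by simp [Nat.coprime_add_self_left]
  rw [ZMod.sum_units_eq_sum_range_filter_coprime fun x => stdAddChar (x * (n : ZMod m)),
    sum_filter, ← hperiodic.sum_Icc_one_eq_sum_range, ramanujanSum, sum_filter]
  refine sum_congr rfl fun k _ => ?_
  rw [← Nat.cast_mul, ZMod.stdAddChar_natCast, Nat.cast_mul, ← mul_assoc]

theorem totient_mul_ramanujanSum_mul_mul (d r n : ℕ) [NeZero d] [NeZero r] (h : n.Coprime r) :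
    (φ r : ℂ) * ramanujanSum (d * r) (d * n) = φ (d * r) * μ r := by
  have hfibres := (unitsMap (dvd_mul_left r d)).card_nsmul_sum_comp_of_surjective
    (ZMod.unitsMap_surjective _) fun v => stdAddChar (v * n : ZMod r)
  rw [ZMod.card_units_eq_totient, ZMod.card_units_eq_totient,
    ZMod.sum_units_stdAddChar_mul_natCast_of_coprime h, ZMod.sum_units_stdAddChar,
    nsmul_eq_mul, nsmul_eq_mul] at hfibres
  rw [ramanujanSum_eq_sum_units, ← hfibres]
  simp only [ZMod.stdAddChar_mul_natCast_mul_left, ZMod.unitsMap_val]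

theorem ramanujanSum_eq_holder_general (m n : ℕ) (hm : 0 < m) :
    ramanujanSum m n =
      (μ (m / Nat.gcd m n) : ℂ) * (Nat.totient m : ℂ) /
        (Nat.totient (m / Nat.gcd m n) : ℂ) := by
  have hg : 0 < m.gcd n := Nat.gcd_pos_of_pos_left n hm
  have : NeZero (m.gcd n) := ⟨hg.ne'⟩
  have : NeZero (m / m.gcd n) := ⟨(Nat.div_pos (Nat.gcd_le_left n hm) hg).ne'⟩
  have key := totient_mul_ramanujanSum_mul_mul (m.gcd n) (m / m.gcd n) (n / m.gcd n)
    (Nat.coprime_div_gcd_div_gcd hg).symm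
  rw [Nat.mul_div_cancel' (Nat.gcd_dvd_left m n), Nat.mul_div_cancel' (Nat.gcd_dvd_right m n)]
    at key
  rw [eq_div_iff (Nat.cast_ne_zero.2 (Nat.totient_pos.2 (NeZero.pos _)).ne')]
  linear_combination key

/-- Hölder's formula for the Ramanujan sum. -/
theorem ramanujanSum_eq_holder (m n : ℕ) (hm : 0 < m) (hn : 0 < n) :
    ramanujanSum m n =
      (μ (m / Nat.gcd m n) : ℂ) * (Nat.totient m : ℂ) /
        (Nat.totient (m / Nat.gcd m n) : ℂ) :=
  ramanujanSum_eq_holder_general m n hm
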